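/- Fix j ∉ A, b ∈ ℝ, and let D be the uniform distribution on {±1/√n}^n. Let f_A(x) = sign(∏_{i∈A} x_i) where |A| = k and j ∉ A. Let w be drawn uniformly from {−1,0,1}^n. Then for every c > 0, with probability at least 1 − 1/c over the choice of w, |E_{x∼D}[x_j f_A(x) · 1{⟨w,x⟩ + b > 0}]| ≤ c·√(1/C(n−1,k)). -/

import Mathlib

/-!
Up to the factor `n^{-1/2}` contributed by `x_j`, the correlation is the Walsh–Fourier
coefficient at `B = A ∪ {j}` of the threshold unit `h_w(x) = 1{⟨w, x⟩ + b > 0}`. Bessel's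
inequality bounds the sum of the squared coefficients of `h_w` over all `B'` with `|B'| = k + 1`
by `1`. The joint law of `(w, x)` is invariant under permutations of the coordinates, so the
mean over `w` of the squared coefficient is the same at every such `B'`, hence at most
`1 / C(n, k+1) ≤ 1 / C(n-1, k)`. Markov's inequality for the squared coefficient concludes.
-/

open Finset
open scoped BigOperators Classical

/-- The point of the hypercube `{±1/√n}^n` corresponding to a sign pattern `s`. -/
noncomputable def pt (n : ℕ) (s : Fin n → Bool) : Fin n → ℝ :=
  fun j => (if s j then 1 else -1) / Real.sqrt n

/-- The parity function `f_A(x) = sign(∏_{i ∈ A} x_i)`. -/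
noncomputable def parity {n : ℕ} (A : Finset (Fin n)) (s : Fin n → Bool) : ℝ :=
  Real.sign (∏ i ∈ A, pt n s i)

section Walsh

variable {ι : Type*}

noncomputable def walsh (B : Finset ι) (s : ι → Bool) : ℝ :=
  ∏ i ∈ B, if s i then 1 else -1

theorem walsh_eq_one_or_eq_neg_one (B : Finset ι) (s : ι → Bool) :
    walsh B s = 1 ∨ walsh B s = -1 := by
  refine prod_induction _ (fun x => x = 1 ∨ x = -1) ?_ (Or.inl rfl) fun i _ => ?_
  · rintro x y (rfl | rfl) (rfl | rfl) <;> norm_num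
  · cases s i <;> simp

theorem walsh_map_perm (σ : Equiv.Perm ι) (B : Finset ι) (s : ι → Bool) :
    walsh (B.map σ.toEmbedding) s = walsh B (s ∘ σ) := by
  simp [walsh, prod_map]

variable [Fintype ι] [DecidableEq ι]

noncomputable def walshCoeff (h : (ι → Bool) → ℝ) (B : Finset ι) : ℝ :=
  (2 ^ Fintype.card ι)⁻¹ * ∑ s, walsh B s * h s

theorem sum_walsh_mul_walsh (B B' : Finset ι) :
    ∑ s : ι → Bool, walsh B s * walsh B' s = if B = B' then 2 ^ Fintype.card ι else 0 := by
  set g : ι → Bool → ℝ := fun i x =>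
    (if i ∈ B then (if x then 1 else -1) else 1) * (if i ∈ B' then (if x then 1 else -1) else 1)
  have hfactor : ∀ s : ι → Bool, walsh B s * walsh B' s = ∏ i, g i (s i) := by
    intro s
    rw [prod_mul_distrib, prod_ite_mem, prod_ite_mem, univ_inter, univ_inter]
    rfl
  have hcoord : ∀ i, ∑ x, g i x = if (i ∈ B ↔ i ∈ B') then 2 else 0 := by
    intro i
    by_cases h : i ∈ B <;> by_cases h' : i ∈ B' <;> norm_num [g, h, h']
  simp_rw [hfactor]
  rw [← Fintype.prod_sum g, Fintype.prod_congr _ _ hcoord, Fintype.prod_ite_zero, prod_const,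
    card_univ]
  simp only [Finset.ext_iff]

noncomputable def cubeVec (h : (ι → Bool) → ℝ) : EuclideanSpace ℝ (ι → Bool) :=
  WithLp.toLp 2 fun s => (√(2 ^ Fintype.card ι))⁻¹ * h s

theorem inner_cubeVec (h h' : (ι → Bool) → ℝ) :
    inner ℝ (cubeVec h) (cubeVec h') = (2 ^ Fintype.card ι)⁻¹ * ∑ s, h s * h' s := by
  rw [PiLp.inner_apply, mul_sum]
  refine sum_congr rfl fun s _ => ?_
  simp only [cubeVec, Real.inner_apply]
  rw [mul_mul_mul_comm, ← mul_inv, Real.mul_self_sqrt (by positivity)]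

theorem orthonormal_cubeVec_walsh : Orthonormal ℝ fun B : Finset ι => cubeVec (walsh B) := by
  rw [orthonormal_iff_ite]
  intro B B'
  rw [inner_cubeVec, sum_walsh_mul_walsh]
  split_ifs <;> simp

theorem sum_sq_walshCoeff_le (h : (ι → Bool) → ℝ) (F : Finset (Finset ι)) :
    ∑ B ∈ F, walshCoeff h B ^ 2 ≤ (2 ^ Fintype.card ι)⁻¹ * ∑ s, h s ^ 2 := by
  simpa only [Real.norm_eq_abs, sq_abs, ← real_inner_self_eq_norm_sq, inner_cubeVec, ← sq,
    walshCoeff] using orthonormal_cubeVec_walsh.sum_inner_products_le (cubeVec h) (s := F)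

theorem sum_sq_walshCoeff_le_one {h : (ι → Bool) → ℝ} (hh : ∀ s, h s ^ 2 ≤ 1)
    (F : Finset (Finset ι)) : ∑ B ∈ F, walshCoeff h B ^ 2 ≤ 1 := by
  refine (sum_sq_walshCoeff_le h F).trans ?_
  calc (2 ^ Fintype.card ι : ℝ)⁻¹ * ∑ s, h s ^ 2 ≤ (2 ^ Fintype.card ι)⁻¹ * ∑ _s : ι → Bool, 1 :=
        by gcongr with s; exact hh s
    _ = 1 := by simp [Fintype.card_bool]

theorem walshCoeff_map_perm (σ : Equiv.Perm ι) (h : (ι → Bool) → ℝ) (B : Finset ι) :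
    walshCoeff h (B.map σ.toEmbedding) = walshCoeff (fun s => h (s ∘ σ.symm)) B := by
  simp only [walshCoeff, walsh_map_perm]
  congr 1
  exact Fintype.sum_equiv (σ.symm.arrowCongr (Equiv.refl Bool)) _ _ fun s => by
    simp [Equiv.arrowCongr, Function.comp_def]

end Walsh

theorem exists_perm_map_eq_of_card_eq {α : Type*} [DecidableEq α] {s t : Finset α}
    (h : s.card = t.card) : ∃ σ : Equiv.Perm α, s.map σ.toEmbedding = t := by
  have := Set.powersetCard.isPretransitive (α := α) (n := t.card)
  obtain ⟨σ, hσ⟩ := MulAction.exists_smul_eq (Equiv.Perm α)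
    (⟨s, h⟩ : Set.powersetCard α t.card) ⟨t, rfl⟩
  refine ⟨σ, ?_⟩
  simpa [map_eq_image, smul_finset_def] using congrArg Subtype.val hσ

theorem card_filter_not_mul_le_sum {α : Type*} [Fintype α] {p : α → Prop} [DecidablePred p]
    {f : α → ℝ} {t : ℝ} (hf : ∀ x, 0 ≤ f x) (hp : ∀ x, ¬ p x → t ≤ f x) :
    #(univ.filter fun x => ¬ p x) * t ≤ ∑ x, f x := by
  rw [← nsmul_eq_mul]
  exact (card_nsmul_le_sum _ _ _ fun x hx => hp x (mem_filter.1 hx).2).trans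
    (sum_le_sum_of_subset_of_nonneg (subset_univ _) fun x _ _ => hf x)

theorem one_sub_inv_mul_card_le_card_filter {α : Type*} [Fintype α] (p : α → Prop)
    [DecidablePred p] {c : ℝ} (hc : 0 < c)
    (hbad : #(univ.filter fun x => ¬ p x) * c ^ 2 ≤ Fintype.card α) :
    (1 - 1 / c) * Fintype.card α ≤ #(univ.filter p) := by
  have hsplit : (#(univ.filter p) : ℝ) + #(univ.filter fun x => ¬ p x) = Fintype.card α := by
    exact_mod_cast card_univ (α := α) ▸ card_filter_add_card_filter_not (s := univ) p
  have hbad_le : (#(univ.filter fun x => ¬ p x) : ℝ) ≤ Fintype.card α / c := by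
    rw [le_div_iff₀ hc]
    rcases le_total c 1 with hc1 | hc1
    · nlinarith [Nat.cast_nonneg (α := ℝ) #(univ.filter p)]
    · nlinarith [Nat.cast_nonneg (α := ℝ) #(univ.filter fun x => ¬ p x)]
  linarith [show (1 - 1 / c) * Fintype.card α = Fintype.card α - Fintype.card α / c by ring]

theorem pt_eq_inv_sqrt_mul (n : ℕ) (s : Fin n → Bool) (i : Fin n) :
    pt n s i = (√n)⁻¹ * if s i then 1 else -1 := by
  rw [pt, div_eq_inv_mul]

theorem parity_eq_walsh {n : ℕ} (hn : 0 < n) (A : Finset (Fin n)) (s : Fin n → Bool) :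
    parity A s = walsh A s := by
  have hscale : 0 < (√n)⁻¹ ^ #A := by positivity
  rw [parity, prod_congr rfl fun i _ => pt_eq_inv_sqrt_mul n s i, prod_mul_distrib, prod_const]
  change Real.sign (_ * walsh A s) = walsh A s
  rcases walsh_eq_one_or_eq_neg_one A s with h | h <;> rw [h]
  · rw [mul_one, Real.sign_of_pos hscale]
  · rw [mul_neg_one, Real.sign_of_neg (neg_neg_of_pos hscale)]

theorem correlation_eq_inv_sqrt_mul_walshCoeff {n : ℕ} {A : Finset (Fin n)}
    {j : Fin n} (hj : j ∉ A) (h : (Fin n → Bool) → ℝ) :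
    (1 / 2 ^ n : ℝ) * ∑ s, pt n s j * parity A s * h s = (√n)⁻¹ * walshCoeff h (insert j A) := by
  simp only [walshCoeff, walsh, prod_insert hj, Fintype.card_fin, mul_sum]
  refine sum_congr rfl fun s _ => ?_
  rw [pt_eq_inv_sqrt_mul, parity_eq_walsh j.pos, walsh]
  ring

theorem abs_correlation_le_abs_walshCoeff {n : ℕ} {A : Finset (Fin n)}
    {j : Fin n} (hj : j ∉ A) (h : (Fin n → Bool) → ℝ) :
    |(1 / 2 ^ n : ℝ) * ∑ s, pt n s j * parity A s * h s| ≤ |walshCoeff h (insert j A)| := by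
  have hscale : |(√n)⁻¹| ≤ 1 := by
    rw [abs_inv, abs_of_nonneg (Real.sqrt_nonneg _)]
    exact inv_le_one_of_one_le₀ (Real.one_le_sqrt.2 (by exact_mod_cast j.pos))
  rw [correlation_eq_inv_sqrt_mul_walshCoeff hj, abs_mul]
  exact mul_le_of_le_one_left (abs_nonneg _) hscale

noncomputable def neuron (n : ℕ) (b : ℝ) (w : Fin n → Fin 3) (s : Fin n → Bool) : ℝ :=
  if 0 < (∑ i, ((w i : ℝ) - 1) * pt n s i) + b then 1 else 0

section neuron

variable {n : ℕ} (b : ℝ)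

theorem neuron_sq_le_one (w : Fin n → Fin 3) (s : Fin n → Bool) : neuron n b w s ^ 2 ≤ 1 := by
  unfold neuron
  split_ifs <;> norm_num

theorem neuron_comp_perm (σ : Equiv.Perm (Fin n)) (w : Fin n → Fin 3) (s : Fin n → Bool) :
    neuron n b w (s ∘ σ.symm) = neuron n b (w ∘ σ) s := by
  unfold neuron
  congr 3
  exact Fintype.sum_equiv σ.symm _ _ fun i => by simp [pt]

theorem sum_sq_walshCoeff_neuron_map_perm (σ : Equiv.Perm (Fin n)) (B : Finset (Fin n)) :
    ∑ w, walshCoeff (neuron n b w) (B.map σ.toEmbedding) ^ 2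
      = ∑ w, walshCoeff (neuron n b w) B ^ 2 := by
  simp only [walshCoeff_map_perm, neuron_comp_perm]
  exact Fintype.sum_equiv (σ.symm.arrowCongr (Equiv.refl (Fin 3))) _ _ fun w => by
    simp [Equiv.arrowCongr, Function.comp_def]

theorem sum_sq_walshCoeff_neuron_eq_of_card_eq {B B' : Finset (Fin n)} (h : #B = #B') :
    ∑ w, walshCoeff (neuron n b w) B ^ 2 = ∑ w, walshCoeff (neuron n b w) B' ^ 2 := by
  obtain ⟨σ, rfl⟩ := exists_perm_map_eq_of_card_eq h
  exact (sum_sq_walshCoeff_neuron_map_perm b σ B).symm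

theorem choose_mul_sum_sq_walshCoeff_neuron_le (B : Finset (Fin n)) :
    n.choose #B * ∑ w, walshCoeff (neuron n b w) B ^ 2 ≤ 3 ^ n := by
  calc n.choose #B * ∑ w, walshCoeff (neuron n b w) B ^ 2
      = ∑ B' ∈ univ.powersetCard #B, ∑ w, walshCoeff (neuron n b w) B' ^ 2 := by
        symm
        rw [sum_congr rfl fun B' hB' => sum_sq_walshCoeff_neuron_eq_of_card_eq b
          (mem_powersetCard.1 hB').2, sum_const, card_powersetCard, card_univ,
          Fintype.card_fin, nsmul_eq_mul]
    _ = ∑ w, ∑ B' ∈ univ.powersetCard #B, walshCoeff (neuron n b w) B' ^ 2 := sum_comm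
    _ ≤ ∑ _w : Fin n → Fin 3, 1 :=
        sum_le_sum fun w _ => sum_sq_walshCoeff_le_one (neuron_sq_le_one b w) _
    _ = 3 ^ n := by simp

end neuron

/-- `w : Fin n → Fin 3` encodes the weight vector `w - 1 ∈ {-1, 0, 1}ⁿ`; the probability over `w`
appears multiplied by `3ⁿ`. -/
theorem stmt_5_general (n k : ℕ)
    (A : Finset (Fin n)) (hA : A.card = k) (j : Fin n) (hj : j ∉ A)
    (b c : ℝ) (hc : 0 < c) :
    (1 - 1 / c) * 3 ^ n ≤
      ((Finset.univ.filter (fun w : Fin n → Fin 3 =>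
        |(1 / 2 ^ n : ℝ) * ∑ s : Fin n → Bool,
            pt n s j * parity A s *
              (if 0 < (∑ i, ((w i : ℝ) - 1) * pt n s i) + b then 1 else 0)|
          ≤ c * Real.sqrt (1 / ((n - 1).choose k)))).card : ℝ) := by
  change _ ≤ (#(univ.filter fun w => |(1 / 2 ^ n : ℝ) * ∑ s, pt n s j * parity A s *
    neuron n b w s| ≤ c * √(1 / (n - 1).choose k)) : ℝ)
  set B := insert j A
  set C : ℝ := ↑((n - 1).choose k)
  have hB : #B = k + 1 := by rw [card_insert_of_notMem hj, hA]
  have hC : 0 < C := by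
    have := hB ▸ card_le_univ B
    rw [Fintype.card_fin] at this
    exact Nat.cast_pos.2 (Nat.choose_pos (by omega))
  have hchoose : (n - 1).choose k ≤ n.choose (k + 1) := by
    obtain ⟨m, rfl⟩ := Nat.exists_eq_add_one_of_ne_zero j.pos.ne'
    simp [Nat.choose_succ_succ]
  have hmass : (∑ w, walshCoeff (neuron n b w) B ^ 2) * C ≤ 3 ^ n := by
    rw [mul_comm]
    exact le_trans (by gcongr; exact Nat.cast_le.2 hchoose)
      (hB ▸ choose_mul_sum_sq_walshCoeff_neuron_le b B)
  have hcard : (Fintype.card (Fin n → Fin 3) : ℝ) = 3 ^ n := by simp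
  rw [← hcard]
  refine one_sub_inv_mul_card_le_card_filter _ hc ?_
  rw [hcard, ← div_mul_cancel₀ (c ^ 2) hC.ne', ← mul_assoc]
  refine le_trans (mul_le_mul_of_nonneg_right (card_filter_not_mul_le_sum
    (fun w => sq_nonneg (walshCoeff (neuron n b w) B)) fun w hfar => ?_) hC.le) hmass
  have h := pow_le_pow_left₀ (by positivity)
    ((not_le.1 hfar).trans_le (abs_correlation_le_abs_walshCoeff hj _)).le 2
  rwa [mul_pow, Real.sq_sqrt (by positivity), sq_abs, ← div_eq_mul_one_div] at h

/-- For `w` uniform in `{-1,0,1}^n` (encoded as `Fin n → Fin 3` with value map `t ↦ t - 1`),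
with probability at least `1 - 1/c`,
`|E_{x∼uniform}[x_j f_A(x) 1{⟨w,x⟩+b>0}]| ≤ c √(1/C(n-1,k))`. -/
theorem stmt_5 (n k : ℕ) (hn : 0 < n)
    (A : Finset (Fin n)) (hA : A.card = k) (j : Fin n) (hj : j ∉ A)
    (b c : ℝ) (hc : 0 < c) :
    (1 - 1 / c) * 3 ^ n ≤
      ((Finset.univ.filter (fun w : Fin n → Fin 3 =>
        |(1 / 2 ^ n : ℝ) * ∑ s : Fin n → Bool,
            pt n s j * parity A s *
              (if 0 < (∑ i, ((w i : ℝ) - 1) * pt n s i) + b then 1 else 0)|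
          ≤ c * Real.sqrt (1 / ((n - 1).choose k)))).card : ℝ) :=
  stmt_5_general n k A hA j hj b c hc
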